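/- arXiv:1110.6198 — 3 statements merged into one kernel-verified Lean document; each statement's English description precedes it below -/
import Mathlib

section
/- Let U be a compact open subset of a topological space X, and let F be a finite cover of U by compact open subsets of U. For each nonempty H ⊆ F define V_H = (⋂ H) \ (⋃ (F \ H)). Then each V_H is compact and open, the nonempty V_H are pairwise disjoint, their union is U, each nonempty V_H is contained in at least one member of F, and whenever a nonempty V_H is not contained in some V ∈ F, it is disjoint from V. -/
/-- Disjointification of a finite cover of a compact open set `U` by compact open
subsets of `U`: the sets `V_H = (⋂ H) \ (⋃ (F \ H))`, for nonempty `H ⊆ F`, are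
compact open, pairwise disjoint, cover `U`, each nonempty one is contained in a
member of `F`, and each is disjoint from any member of `F` not containing it. -/
theorem disjointification {X : Type*} [TopologicalSpace X] [T2Space X]
    [DecidableEq (Set X)]
    (U : Set X) (hUc : IsCompact U) (hUo : IsOpen U)
    (F : Finset (Set X)) (hF : ∀ V ∈ F, IsCompact V ∧ IsOpen V ∧ V ⊆ U)
    (hcover : ⋃₀ ↑F = U)
    (VH : Finset (Set X) → Set X)
    (hVH : ∀ H : Finset (Set X), VH H = ⋂₀ ↑H \ ⋃₀ ↑(F \ H)) :
    (∀ H : Finset (Set X), H ⊆ F → H.Nonempty → IsCompact (VH H) ∧ IsOpen (VH H)) ∧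
    (∀ H H' : Finset (Set X), H ⊆ F → H' ⊆ F → H.Nonempty → H'.Nonempty → H ≠ H' →
      Disjoint (VH H) (VH H')) ∧
    (⋃ H ∈ {H : Finset (Set X) | H ⊆ F ∧ H.Nonempty}, VH H) = U ∧
    (∀ H : Finset (Set X), H ⊆ F → H.Nonempty → (VH H).Nonempty → ∃ V ∈ F, VH H ⊆ V) ∧
    (∀ H : Finset (Set X), H ⊆ F → H.Nonempty → ∀ V ∈ F, ¬ VH H ⊆ V → Disjoint (VH H) V) := by
  classical
  have hclosed : ∀ V ∈ F, IsClosed V := fun V hV => (hF V hV).1.isClosed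
  -- each VH H is contained in every member of H
  have hsub : ∀ (H : Finset (Set X)) (V : Set X), V ∈ H → VH H ⊆ V := by
    intro H V hV x hx
    rw [hVH] at hx
    exact hx.1 V (by exact_mod_cast hV)
  -- each VH H is disjoint from every member of F \ H
  have hdisj : ∀ (H : Finset (Set X)) (V : Set X), V ∈ F → V ∉ H → Disjoint (VH H) V := by
    intro H V hVF hVH'
    refine Set.disjoint_left.mpr fun x hx hxV => ?_
    rw [hVH] at hx
    exact hx.2 ⟨V, by exact_mod_cast Finset.mem_sdiff.mpr ⟨hVF, hVH'⟩, hxV⟩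
  refine ⟨?_, ?_, ?_, ?_, ?_⟩
  · -- compact and open
    intro H hHF hne
    obtain ⟨V₀, hV₀⟩ := hne
    have hIc : IsClosed (⋂₀ (↑H : Set (Set X))) :=
      isClosed_sInter fun V hV => hclosed V (hHF (by exact_mod_cast hV))
    have hIo : IsOpen (⋂₀ (↑H : Set (Set X))) :=
      Set.Finite.isOpen_sInter H.finite_toSet
        (fun V hV => (hF V (hHF (by exact_mod_cast hV))).2.1)
    have hUcl : IsClosed (⋃₀ (↑(F \ H) : Set (Set X))) := by
      rw [Set.sUnion_eq_biUnion]
      exact Set.Finite.isClosed_biUnion (F \ H).finite_toSet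
        fun V hV => hclosed V (Finset.mem_sdiff.mp (Finset.mem_coe.mp hV)).1
    have hUop : IsOpen (⋃₀ (↑(F \ H) : Set (Set X))) :=
      isOpen_sUnion fun V hV =>
        (hF V (Finset.mem_sdiff.mp (by exact_mod_cast hV)).1).2.1
    constructor
    · rw [hVH]
      refine IsCompact.of_isClosed_subset (hF V₀ (hHF hV₀)).1
        (hIc.inter hUop.isClosed_compl) ?_
      exact fun x hx => hx.1 V₀ (by exact_mod_cast hV₀)
    · rw [hVH]
      exact hIo.sdiff hUcl
  · -- pairwise disjoint
    intro H H' hHF hH'F _ _ hne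
    have : ¬ (H ⊆ H' ∧ H' ⊆ H) := fun ⟨h1, h2⟩ => hne (Finset.Subset.antisymm h1 h2)
    rcases not_and_or.mp this with h | h
    · obtain ⟨V, hVH1, hVH2⟩ := Finset.not_subset.mp h
      exact ((hdisj H' V (hHF hVH1) hVH2).mono_right (hsub H V hVH1)).symm
    · obtain ⟨V, hVH1, hVH2⟩ := Finset.not_subset.mp h
      exact ((hdisj H V (hH'F hVH1) hVH2).mono_right (hsub H' V hVH1))
  · -- cover
    ext x
    simp only [Set.mem_iUnion, Set.mem_setOf_eq, exists_prop]
    constructor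
    · rintro ⟨H, ⟨hHF, hne⟩, hx⟩
      obtain ⟨V, hV⟩ := hne
      exact (hF V (hHF hV)).2.2 (hsub H V hV hx)
    · intro hxU
      set H := F.filter (fun V => x ∈ V) with hH
      have hHF : H ⊆ F := Finset.filter_subset _ _
      have hne : H.Nonempty := by
        rw [← hcover] at hxU
        obtain ⟨V, hVF, hxV⟩ := hxU
        exact ⟨V, Finset.mem_filter.mpr ⟨by exact_mod_cast hVF, hxV⟩⟩
      refine ⟨H, ⟨hHF, hne⟩, ?_⟩
      rw [hVH]
      constructor
      · intro V hV
        exact (Finset.mem_filter.mp (Finset.mem_coe.mp hV)).2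
      · rintro ⟨V, hV, hxV⟩
        have := Finset.mem_sdiff.mp (Finset.mem_coe.mp hV)
        exact this.2 (Finset.mem_filter.mpr ⟨this.1, hxV⟩)
  · -- contained in a member of F
    intro H hHF hne _
    obtain ⟨V, hV⟩ := hne
    exact ⟨V, hHF hV, hsub H V hV⟩
  · -- disjoint from members of F not containing it
    intro H hHF hne V hVF hnsub
    by_cases hVinH : V ∈ H
    · exact absurd (hsub H V hVinH) hnsub
    · exact hdisj H V hVF hVinH
end

section
/- Let G be a locally compact Hausdorff groupoid with totally disconnected unit space such that s is a local homeomorphism. Then the set A(G) of locally constant compactly supported complex functions is dense in C_c(G) with respect to the I-norm (and hence with respect to the uniform norm). -/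
open scoped BigOperators

structure EtaleGroupoid (G : Type*) [TopologicalSpace G] where
  r : G → G
  s : G → G
  mul : G → G → G
  inv : G → G
  mul_assoc' : ∀ a b c, s a = r b → s b = r c → mul (mul a b) c = mul a (mul b c)
  r_mul : ∀ a b, s a = r b → r (mul a b) = r a
  s_mul : ∀ a b, s a = r b → s (mul a b) = s b
  unit_mul : ∀ a, mul (r a) a = a
  mul_unit : ∀ a, mul a (s a) = a
  inv_inv : ∀ a, inv (inv a) = a
  r_inv : ∀ a, r (inv a) = s a
  s_inv : ∀ a, s (inv a) = r a
  mul_inv : ∀ a, mul a (inv a) = r a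
  inv_mul : ∀ a, mul (inv a) a = s a
  continuous_r : Continuous r
  continuous_s : Continuous s
  continuous_inv : Continuous inv
  continuous_mul : ContinuousOn (fun p : G × G => mul p.1 p.2) {p : G × G | s p.1 = r p.2}

namespace EtaleGroupoid

variable {G : Type*} [TopologicalSpace G] (g : EtaleGroupoid G)

/-- The unit space `G⁰`. -/
def unitSpace : Set G := Set.range g.r

/-- A bisection: a subset on which both `r` and `s` are injective. -/
def IsBisection (U : Set G) : Prop := Set.InjOn g.r U ∧ Set.InjOn g.s U

/-- The set-product `UV` of two subsets of `G`. -/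
def setMul (U V : Set G) : Set G :=
  {x | ∃ a ∈ U, ∃ b ∈ V, g.s a = g.r b ∧ x = g.mul a b}

/-- The source map is a local homeomorphism (onto its open image). -/
def SourceEtale : Prop :=
  ∀ a : G, ∃ U : Set G, IsOpen U ∧ a ∈ U ∧ Set.InjOn g.s U ∧
    ∀ V : Set G, V ⊆ U → IsOpen V → IsOpen (g.s '' V)

/-- The unit space is totally disconnected: it has a basis of compact open sets. -/
def UnitBasis : Prop :=
  ∀ u ∈ g.unitSpace, ∀ V : Set G, IsOpen V → u ∈ V →
    ∃ W : Set G, IsCompact W ∧ IsOpen W ∧ u ∈ W ∧ W ⊆ V ∧ W ⊆ g.unitSpace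

/-- Convolution of complex functions on `G`. -/
noncomputable def conv (f h : G → ℂ) : G → ℂ :=
  fun γ => ∑ᶠ α ∈ {α : G | g.r α = g.r γ}, f α * h (g.mul (g.inv α) γ)

/-- The involution `f*(γ) = conj (f (γ⁻¹))`. -/
noncomputable def star' (f : G → ℂ) : G → ℂ := fun γ => (starRingEnd ℂ) (f (g.inv γ))

/-- Indicator function of a set. -/
noncomputable def ind (U : Set G) : G → ℂ := Set.indicator U 1

/-- `c : G → Γ` is a cocycle. -/
def IsCocycle {Γ : Type*} [Group Γ] (c : G → Γ) : Prop :=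
  ∀ a b, g.s a = g.r b → c (g.mul a b) = c a * c b

/-- The `n`-graded compact open bisections. -/
def BcoGr {Γ : Type*} (c : G → Γ) (n : Γ) : Set (Set G) :=
  {U | IsCompact U ∧ IsOpen U ∧ g.IsBisection U ∧ ∀ x ∈ U, c x = n}

/-- All graded compact open bisections. -/
def Bco {Γ : Type*} (c : G → Γ) : Set (Set G) := ⋃ n, g.BcoGr c n

/-- `A(G)`: the locally constant, compactly supported complex functions, as a
submodule of `G → ℂ`. -/
noncomputable def AG : Submodule ℂ (G → ℂ) where
  carrier := {f | IsLocallyConstant f ∧ HasCompactSupport f}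
  add_mem' := by
    rintro f h ⟨hf1, hf2⟩ ⟨hh1, hh2⟩
    exact ⟨hf1.comp₂ hh1 (· + ·), hf2.add hh2⟩
  zero_mem' := ⟨IsLocallyConstant.const 0, by
    simp [HasCompactSupport, tsupport]⟩
  smul_mem' := by
    rintro a f ⟨hf1, hf2⟩
    constructor
    · have h := hf1.comp (fun z : ℂ => a * z)
      have : a • f = (fun z : ℂ => a * z) ∘ f := by
        funext x; simp [Function.comp, smul_eq_mul]
      rwa [this]
    · exact hf2.mono fun x hx => by
        have h : a * f x ≠ 0 := hx
        exact fun h0 => h (by simp [h0])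

/-- The I-norm on `C_c(G)`. -/
noncomputable def Inorm (f : G → ℂ) : ℝ :=
  max (⨆ u ∈ g.unitSpace, ∑ᶠ α ∈ {α : G | g.r α = u}, ‖f α‖)
      (⨆ u ∈ g.unitSpace, ∑ᶠ α ∈ {α : G | g.s α = u}, ‖f α‖)

/-- A representation of the graded compact open bisections in a complex algebra. -/
structure IsRep {Γ : Type*} {B : Type*} [Ring B] [Algebra ℂ B]
    (c : G → Γ) (t : Set G → B) : Prop where
  map_empty : t ∅ = 0
  map_mul : ∀ U V, U ∈ g.Bco c → V ∈ g.Bco c → t U * t V = t (g.setMul U V)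
  map_union : ∀ n U V, U ∈ g.BcoGr c n → V ∈ g.BcoGr c n → Disjoint U V →
    g.IsBisection (U ∪ V) → t U + t V = t (U ∪ V)

end EtaleGroupoid

/-!
Compact open bisections form a basis of the topology of `G`: near any arrow, `s` is a local
homeomorphism onto an open subset of the unit space, where compact open sets form a basis, and
`r = s ∘ inv`. Cover the support of `f` by `n` open bisections, and approximate `f` uniformly
within `ε / (n + 1)` by a locally constant `h` supported in their union, built from a finite
cover by compact open sets on which `f` varies little. A fibre of `r` or `s` meets each
bisection at most once, so each fibre sum of `‖f - h‖` has at most `n` nonzero terms.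
-/

open Set Function

theorem IsCompact.inter_preimage_of_injOn {X Y : Type*} [TopologicalSpace X]
    [TopologicalSpace Y] {f : X → Y} {U : Set X} (hf : ContinuousOn f U) (hinj : InjOn f U)
    (hopen : ∀ V ⊆ U, IsOpen V → IsOpen (f '' V)) (hU : IsOpen U) {K : Set Y}
    (hK : IsCompact K) (hKU : K ⊆ f '' U) : IsCompact (U ∩ f ⁻¹' K) := by
  have he : Topology.IsOpenEmbedding (U.domRestrict f) := by
    refine .of_continuous_injective_isOpenMap hf.domRestrict (injOn_iff_injective.1 hinj) ?_
    rintro _ ⟨V, hV, rfl⟩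
    rw [domRestrict_eq, image_comp, Subtype.image_preimage_coe]
    exact hopen _ inter_subset_left (hU.inter hV)
  have hK' := he.isInducing.isCompact_preimage' hK (by rwa [range_domRestrict])
  convert hK'.image continuous_subtype_val using 1
  ext x
  simp [and_comm, domRestrict]

theorem IsLocallyConstant.piecewise_of_isClopen {X Y : Type*} [TopologicalSpace X] {U : Set X}
    [∀ x, Decidable (x ∈ U)] (hU : IsClopen U) {f g : X → Y} (hf : IsLocallyConstant f)
    (hg : IsLocallyConstant g) : IsLocallyConstant (U.piecewise f g) := by
  refine IsLocallyConstant.iff_isOpen_fiber.2 fun y => ?_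
  rw [piecewise_preimage]
  exact ((hf.isOpen_fiber y).inter hU.isOpen).union ((hg.isOpen_fiber y).inter hU.compl.isOpen)

section LocallyConstantApprox

variable {X E : Type*} [TopologicalSpace X] [SeminormedAddCommGroup E]

theorem exists_isLocallyConstant_norm_sub_le_on_biUnion (f : X → E) {ι : Type*}
    {B : ι → Set X} {c : ι → E} {δ : ℝ} (t : Finset ι) (hB : ∀ i ∈ t, IsClopen (B i))
    (hfB : ∀ i ∈ t, ∀ x ∈ B i, ‖f x - c i‖ ≤ δ) :
    ∃ h : X → E, IsLocallyConstant h ∧ support h ⊆ ⋃ i ∈ t, B i ∧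
      ∀ x ∈ ⋃ i ∈ t, B i, ‖f x - h x‖ ≤ δ := by
  classical
  induction t using Finset.induction_on with
  | empty => exact ⟨0, .const 0, by simp, by simp⟩
  | insert j t _ ih =>
    obtain ⟨h, hlc, hsupp, hle⟩ := ih (fun i hi => hB i (Finset.mem_insert_of_mem hi))
      (fun i hi => hfB i (Finset.mem_insert_of_mem hi))
    have hj := Finset.mem_insert_self j t
    refine ⟨(B j).piecewise (fun _ => c j) h,
      (IsLocallyConstant.const _).piecewise_of_isClopen (hB j hj) hlc, ?_, ?_⟩
    · rw [Finset.set_biUnion_insert]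
      intro x hx
      by_cases hxj : x ∈ B j
      · exact Or.inl hxj
      · rw [mem_support, piecewise_eq_of_notMem _ _ _ hxj] at hx
        exact Or.inr (hsupp hx)
    · rw [Finset.set_biUnion_insert]
      intro x hx
      by_cases hxj : x ∈ B j
      · rw [piecewise_eq_of_mem _ _ _ hxj]
        exact hfB j hj x hxj
      · rw [piecewise_eq_of_notMem _ _ _ hxj]
        exact hle x (hx.resolve_left hxj)

theorem exists_isLocallyConstant_hasCompactSupport_norm_sub_le [T2Space X] {f : X → E}
    (hf : Continuous f) (hfc : HasCompactSupport f) {W : Set X} (hW : IsOpen W)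
    (hfW : tsupport f ⊆ W)
    (hbasis : ∀ x ∈ tsupport f, ∀ O, IsOpen O → x ∈ O →
      ∃ B, IsCompact B ∧ IsOpen B ∧ x ∈ B ∧ B ⊆ O)
    {δ : ℝ} (hδ : 0 < δ) :
    ∃ h : X → E, IsLocallyConstant h ∧ HasCompactSupport h ∧ support h ⊆ W ∧
      ∀ x, ‖f x - h x‖ ≤ δ := by
  choose! B hBc hBo hxB hBO using fun x hx =>
    hbasis x hx (W ∩ f ⁻¹' Metric.ball (f x) δ) (hW.inter (Metric.isOpen_ball.preimage hf))
      ⟨hfW hx, Metric.mem_ball_self hδ⟩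
  obtain ⟨t, hts, htcover⟩ :=
    hfc.isCompact.elim_nhds_subcover B fun x hx => (hBo x hx).mem_nhds (hxB x hx)
  obtain ⟨h, hlc, hsupp, hle⟩ := exists_isLocallyConstant_norm_sub_le_on_biUnion f (c := f) t
    (fun i hi => ⟨(hBc i (hts i hi)).isClosed, hBo i (hts i hi)⟩)
    (fun i hi x hx => (mem_ball_iff_norm.1 (hBO i (hts i hi) hx).2).le)
  have hsuppB : ∀ x ∉ ⋃ i ∈ t, B i, h x = 0 :=
    fun x hx => notMem_support.1 fun h' => hx (hsupp h')
  refine ⟨h, hlc, .intro (t.isCompact_biUnion fun i hi => hBc i (hts i hi)) hsuppB,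
    hsupp.trans (iUnion₂_subset fun i hi => (hBO i (hts i hi)).trans inter_subset_left),
    fun x => ?_⟩
  by_cases hx : x ∈ ⋃ i ∈ t, B i
  · exact hle x hx
  · rw [image_eq_zero_of_notMem_tsupport fun h' => hx (htcover h'), hsuppB x hx, sub_zero,
      norm_zero]
    exact hδ.le

end LocallyConstantApprox

theorem finsum_mem_fiber_le {α β ι : Type*} (P : α → β) {V : ι → Set α} {t : Finset ι}
    (hP : ∀ i ∈ t, InjOn P (V i)) {φ : α → ℝ} (hφ : support φ ⊆ ⋃ i ∈ t, V i) {δ : ℝ}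
    (hδ0 : 0 ≤ δ) (hφδ : ∀ x, φ x ≤ δ) (u : β) :
    ∑ᶠ x ∈ {x | P x = u}, φ x ≤ t.card * δ := by
  have hsub : ∀ i ∈ t, ({x | P x = u} ∩ V i).Subsingleton :=
    fun i hi x hx y hy => hP i hi hx.2 hy.2 (hx.1.trans hy.1.symm)
  set S := {x | P x = u} ∩ ⋃ i ∈ t, V i
  have hSeq : S = ⋃ i ∈ t, {x | P x = u} ∩ V i := inter_iUnion₂ _ _
  have hS : S.Finite := hSeq ▸ t.finite_toSet.biUnion fun i hi => (hsub i hi).finite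
  have hScard : S.ncard ≤ t.card := hSeq ▸
    (t.set_ncard_biUnion_le _).trans <| (Finset.sum_le_card_nsmul _ _ 1 fun i hi =>
      (ncard_le_one_iff (hsub i hi).finite).2 fun hx hy => hsub i hi hx hy).trans (by simp)
  have hfiber : ∑ᶠ x ∈ {x | P x = u}, φ x = ∑ᶠ x ∈ S, φ x := by
    refine finsum_mem_inter_support_eq φ _ _ ?_
    rw [inter_assoc, inter_eq_right.2 hφ]
  calc ∑ᶠ x ∈ {x | P x = u}, φ x = ∑ x ∈ hS.toFinset, φ x := by
        rw [hfiber, finsum_mem_eq_finite_toFinset_sum]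
    _ ≤ hS.toFinset.card • δ := Finset.sum_le_card_nsmul _ _ _ fun x _ => hφδ x
    _ ≤ t.card * δ := by
        rw [nsmul_eq_mul, ← ncard_eq_toFinset_card S hS]
        exact mul_le_mul_of_nonneg_right (by exact_mod_cast hScard) hδ0

namespace EtaleGroupoid

variable {G : Type*} [TopologicalSpace G] (g : EtaleGroupoid G)

theorem injOn_r_preimage_inv {U : Set G} (hU : InjOn g.s U) : InjOn g.r (g.inv ⁻¹' U) := by
  intro x hx y hy hxy
  have := hU hx hy (by rw [g.s_inv, g.s_inv, hxy])
  rw [← g.inv_inv x, this, g.inv_inv]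

theorem exists_isCompact_isOpen_isBisection (hs : g.SourceEtale) (hu : g.UnitBasis) {a : G}
    {O : Set G} (hO : IsOpen O) (haO : a ∈ O) :
    ∃ V, IsCompact V ∧ IsOpen V ∧ a ∈ V ∧ V ⊆ O ∧ g.IsBisection V := by
  obtain ⟨U, hUo, haU, hUs, hUimg⟩ := hs a
  obtain ⟨U', hU'o, haU', hU's, -⟩ := hs (g.inv a)
  set U₂ := U ∩ g.inv ⁻¹' U' ∩ O
  have hU₂U : U₂ ⊆ U := fun x hx => hx.1.1
  have hU₂o : IsOpen U₂ := (hUo.inter (hU'o.preimage g.continuous_inv)).inter hO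
  have hU₂s : InjOn g.s U₂ := hUs.mono hU₂U
  obtain ⟨W, hWc, hWo, haW, hWU₂, -⟩ :=
    hu (g.s a) ⟨g.inv a, g.r_inv a⟩ _ (hUimg U₂ hU₂U hU₂o) ⟨a, ⟨⟨haU, haU'⟩, haO⟩, rfl⟩
  refine ⟨U₂ ∩ g.s ⁻¹' W, ?_, hU₂o.inter (hWo.preimage g.continuous_s),
    ⟨⟨⟨haU, haU'⟩, haO⟩, haW⟩, fun x hx => hx.1.2,
    (g.injOn_r_preimage_inv hU's).mono fun x hx => hx.1.1.2, hU₂s.mono inter_subset_left⟩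
  exact hWc.inter_preimage_of_injOn g.continuous_s.continuousOn hU₂s
    (fun V hV => hUimg V (hV.trans hU₂U)) hU₂o hWU₂

theorem Inorm_le_of_support_subset_biUnion {ι : Type*} {V : ι → Set G} {t : Finset ι}
    (hV : ∀ i ∈ t, g.IsBisection (V i)) {φ : G → ℂ} (hφ : support φ ⊆ ⋃ i ∈ t, V i)
    {δ : ℝ} (hδ0 : 0 ≤ δ) (hφδ : ∀ x, ‖φ x‖ ≤ δ) : g.Inorm φ ≤ t.card * δ := by
  have hfiber (P : G → G) (hP : ∀ i ∈ t, InjOn P (V i)) (u : G) :=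
    finsum_mem_fiber_le P hP (φ := fun x => ‖φ x‖) (by simpa using hφ) hδ0 hφδ u
  have h0 : 0 ≤ (t.card : ℝ) * δ := by positivity
  exact max_le
    (Real.iSup_le (fun u => Real.iSup_le (fun _ => hfiber g.r (fun i hi => (hV i hi).1) u) h0)
      h0)
    (Real.iSup_le (fun u => Real.iSup_le (fun _ => hfiber g.s (fun i hi => (hV i hi).2) u) h0)
      h0)

end EtaleGroupoid

theorem AG_dense_Inorm_general {G : Type*} [TopologicalSpace G] [T2Space G] (g : EtaleGroupoid G)
    (hs : g.SourceEtale) (hu : g.UnitBasis) :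
    ∀ f : G → ℂ, Continuous f → HasCompactSupport f → ∀ ε : ℝ, 0 < ε →
      ∃ h : G → ℂ, IsLocallyConstant h ∧ HasCompactSupport h ∧
        g.Inorm (f - h) ≤ ε ∧ ∀ x : G, ‖f x - h x‖ ≤ ε := by
  intro f hf hfc ε hε
  have hbasis {a : G} {O : Set G} (hO : IsOpen O) (ha : a ∈ O) :=
    g.exists_isCompact_isOpen_isBisection hs hu hO ha
  choose V _ hVo hVmem _ hVbis using fun a : G => hbasis isOpen_univ (mem_univ a)
  obtain ⟨t, htcover⟩ :=
    hfc.elim_finite_subcover V hVo fun x _ => mem_iUnion.2 ⟨x, hVmem x⟩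
  set δ := ε / (t.card + 1)
  have hδ : 0 < δ := by positivity
  obtain ⟨h, hlc, hcs, hhV, hfh⟩ :=
    exists_isLocallyConstant_hasCompactSupport_norm_sub_le hf hfc (isOpen_biUnion fun i _ => hVo i)
      htcover
      (fun _ _ _ hO ha => (hbasis hO ha).imp fun _ hB => ⟨hB.1, hB.2.1, hB.2.2.1, hB.2.2.2.1⟩) hδ
  have hsupp : support (f - h) ⊆ ⋃ i ∈ t, V i :=
    (support_sub f h).trans (union_subset ((subset_tsupport f).trans htcover) hhV)
  have hcardδ : t.card * δ ≤ ε := by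
    rw [mul_div_assoc', div_le_iff₀ (by positivity)]
    nlinarith
  have hδε : δ ≤ ε := div_le_self hε.le (le_add_of_nonneg_left t.card.cast_nonneg)
  exact ⟨h, hlc, hcs,
    (g.Inorm_le_of_support_subset_biUnion (fun i _ => hVbis i) hsupp hδ.le hfh).trans hcardδ,
    fun x => (hfh x).trans hδε⟩

/-- `A(G)` is dense in `C_c(G)` for the I-norm (hence also for the uniform norm). -/
theorem AG_dense_Inorm {G : Type*} [TopologicalSpace G] [T2Space G]
    [LocallyCompactSpace G] (g : EtaleGroupoid G) (hs : g.SourceEtale)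
    (hu : g.UnitBasis) :
    ∀ f : G → ℂ, Continuous f → HasCompactSupport f → ∀ ε : ℝ, 0 < ε →
      ∃ h : G → ℂ, IsLocallyConstant h ∧ HasCompactSupport h ∧
        g.Inorm (f - h) ≤ ε ∧ ∀ x : G, ‖f x - h x‖ ≤ ε :=
  AG_dense_Inorm_general g hs hu
end

section
/- Cuntz-Krieger uniqueness: Let G be a locally compact Hausdorff groupoid with totally disconnected unit space such that s is a local homeomorphism, and suppose the set of units u with trivial isotropy (uGu = {u}) is dense in G⁰. If π : A(G) → B is an algebra homomorphism with nonzero kernel, then there exists a nonempty compact open subset K ⊆ G⁰ such that π(1_K) = 0. -/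
open scoped BigOperators

/-!
Convolving a nonzero `f ∈ ker π` on the left with the indicator of `B⁻¹`, where `B` is a compact
open bisection around a point `γ₀` with `f γ₀ = c ≠ 0` on which `f` is constant, gives an element
`h ∈ ker π` that equals `c` on a neighbourhood `W` of the unit `s γ₀`. By density `W` contains a
unit `u` with trivial isotropy. The non-units in the compact support of `h` then form a compact
set `D` whose image under `(r, s)` misses `(u, u)`, so some compact open neighbourhood `K ⊆ W` of
`u` contains no arrow of `D` with both ends in `K`. Hence `1_K * h * 1_K = c • 1_K`, and
`π (1_K) = 0`.
-/

open EtaleGroupoid Set Function Topology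

lemma finsum_mem_eq_single_of_mem {α M : Type*} [AddCommMonoid M] {F : α → M} {S : Set α}
    {a : α} (ha : a ∈ S) (h : ∀ x ∈ S, x ≠ a → F x = 0) : ∑ᶠ x ∈ S, F x = F a := by
  rw [finsum_mem_def, finsum_eq_single _ a fun x hx => ?_, indicator_of_mem ha]
  by_cases hxS : x ∈ S
  · rw [indicator_of_mem hxS, h x hxS hx]
  · exact indicator_of_notMem hxS F

lemma IsLocallyConstant.indicator_comp_of_continuousOn {X Y M : Type*} [TopologicalSpace X]
    [TopologicalSpace Y] [Zero M] {U : Set X} (hU : IsClopen U) {φ : X → Y}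
    (hφ : ContinuousOn φ U) {f : Y → M} (hf : IsLocallyConstant f) :
    IsLocallyConstant (U.indicator (f ∘ φ)) := by
  refine (IsLocallyConstant.iff_eventually_eq _).2 fun x => ?_
  by_cases hx : x ∈ U
  · have hxU : U ∈ 𝓝 x := hU.isOpen.mem_nhds hx
    filter_upwards [hxU, (hφ.continuousAt hxU).eventually (hf.eventually_eq (φ x))]
      with y hy hfy
    simp [indicator_of_mem hy, indicator_of_mem hx, hfy]
  · filter_upwards [hU.isClosed.isOpen_compl.mem_nhds hx] with y hy
    rw [indicator_of_notMem hy, indicator_of_notMem hx]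

namespace EtaleGroupoid

variable {G : Type*} [TopologicalSpace G] (g : EtaleGroupoid G)

lemma r_mem_unitSpace (a : G) : g.r a ∈ g.unitSpace := ⟨a, rfl⟩

lemma s_mem_unitSpace (a : G) : g.s a ∈ g.unitSpace := ⟨g.inv a, g.r_inv a⟩

lemma unitSpace_eq_range_s : g.unitSpace = range g.s :=
  Subset.antisymm (range_subset_iff.2 fun a => ⟨g.inv a, g.s_inv a⟩)
    (range_subset_iff.2 g.s_mem_unitSpace)

variable {g}

lemma r_eq_self_of_mem_unitSpace {u : G} (hu : u ∈ g.unitSpace) : g.r u = u := by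
  obtain ⟨a, rfl⟩ := hu
  simpa only [g.mul_inv] using g.r_mul a (g.inv a) (g.r_inv a).symm

lemma s_eq_self_of_mem_unitSpace {u : G} (hu : u ∈ g.unitSpace) : g.s u = u := by
  obtain ⟨a, rfl⟩ := hu
  simpa only [g.mul_inv, g.s_inv] using g.s_mul a (g.inv a) (g.r_inv a).symm

lemma inv_eq_self_of_mem_unitSpace {u : G} (hu : u ∈ g.unitSpace) : g.inv u = u :=
  calc g.inv u = g.mul (g.inv u) (g.s (g.inv u)) := (g.mul_unit _).symm
    _ = g.mul (g.inv u) u := by rw [g.s_inv, r_eq_self_of_mem_unitSpace hu]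
    _ = u := by rw [g.inv_mul, s_eq_self_of_mem_unitSpace hu]

lemma mul_inv_cancel_left {a x : G} (h : g.r a = g.r x) : g.mul a (g.mul (g.inv a) x) = x := by
  rw [← g.mul_assoc' _ _ _ (g.r_inv a).symm (by rw [g.s_inv, h]), g.mul_inv, h, g.unit_mul]

lemma SourceEtale.isLocalHomeomorph (hs : g.SourceEtale) : IsLocalHomeomorph g.s := by
  refine IsLocalHomeomorph.mk _ fun a => ?_
  obtain ⟨U, hUo, haU, hinj, hopen⟩ := hs a
  have : Nonempty G := ⟨a⟩
  refine ⟨OpenPartialHomeomorph.ofContinuousOpenRestrict (hinj.toPartialEquiv g.s U)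
    g.continuous_s.continuousOn ?_ hUo, haU, fun _ _ => rfl⟩
  intro O hO
  obtain ⟨O', hO', rfl⟩ := isOpen_induced_iff.1 hO
  convert hopen (O' ∩ U) inter_subset_right (hO'.inter hUo) using 1
  ext
  simp [domRestrict, and_assoc]

lemma isOpen_unitSpace (hs : g.SourceEtale) : IsOpen g.unitSpace :=
  g.unitSpace_eq_range_s ▸ hs.isLocalHomeomorph.isOpenMap.isOpen_range

lemma ind_mem_AG [T2Space G] {K : Set G} (hKc : IsCompact K) (hKo : IsOpen K) :
    ind K ∈ AG :=
  ⟨IsLocallyConstant.indicator_comp_of_continuousOn (φ := id) ⟨hKc.isClosed, hKo⟩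
    continuousOn_id (IsLocallyConstant.const 1),
   HasCompactSupport.intro hKc fun _ hx => indicator_of_notMem hx _⟩

variable (g)

lemma support_conv_subset (a b : G → ℂ) :
    support (g.conv a b) ⊆ g.setMul (support a) (support b) := by
  intro γ hγ
  by_contra hmul
  refine hγ (finsum_mem_eq_zero_of_forall_eq_zero fun α hα => ?_)
  by_contra hne
  obtain ⟨ha, hb⟩ := mul_ne_zero_iff.1 hne
  refine hmul ⟨α, ha, _, hb, ?_, (mul_inv_cancel_left hα).symm⟩
  rw [g.r_mul _ _ (by rw [g.s_inv]; exact hα), g.r_inv]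

lemma isCompact_setMul [T2Space G] {U V : Set G} (hU : IsCompact U) (hV : IsCompact V) :
    IsCompact (g.setMul U V) := by
  have hcomp : IsClosed {p : G × G | g.s p.1 = g.r p.2} :=
    isClosed_eq (g.continuous_s.comp continuous_fst) (g.continuous_r.comp continuous_snd)
  have himage : g.setMul U V =
      (fun p : G × G => g.mul p.1 p.2) '' (U ×ˢ V ∩ {p | g.s p.1 = g.r p.2}) := by
    ext x
    simp [setMul, and_assoc, eq_comm]
  rw [himage]
  exact ((hU.prod hV).inter_right hcomp).image_of_continuousOn
    (g.continuous_mul.mono inter_subset_right)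

lemma hasCompactSupport_conv [T2Space G] {a b : G → ℂ} (ha : HasCompactSupport a)
    (hb : HasCompactSupport b) : HasCompactSupport (g.conv a b) :=
  HasCompactSupport.intro (g.isCompact_setMul ha hb) fun γ hγ => notMem_support.1 fun h => by
    obtain ⟨α, hα, β, hβ, h⟩ := g.support_conv_subset a b h
    exact hγ ⟨α, subset_tsupport _ hα, β, subset_tsupport _ hβ, h⟩

variable {g}

lemma conv_ind_left_apply {K : Set G} (hK : K ⊆ g.unitSpace) (p : G → ℂ) (γ : G) :
    g.conv (ind K) p γ = ind K (g.r γ) * p γ := by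
  rw [conv, finsum_mem_eq_single_of_mem (S := {α | g.r α = g.r γ}) (a := g.r γ)
    (r_eq_self_of_mem_unitSpace (g.r_mem_unitSpace γ))]
  · rw [inv_eq_self_of_mem_unitSpace (g.r_mem_unitSpace γ), g.unit_mul]
  · intro x hx hne
    have hxK : x ∉ K := fun hxK => hne ((r_eq_self_of_mem_unitSpace (hK hxK)).symm.trans hx)
    rw [ind, indicator_of_notMem hxK, zero_mul]

lemma conv_ind_right_apply {K : Set G} (hK : K ⊆ g.unitSpace) (p : G → ℂ) (γ : G) :
    g.conv p (ind K) γ = p γ * ind K (g.s γ) := by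
  rw [conv, finsum_mem_eq_single_of_mem (S := {α | g.r α = g.r γ}) (a := γ) rfl, g.inv_mul]
  intro x hx hne
  have hxγ : g.mul (g.inv x) γ ∉ K := by
    intro hmem
    have hsx : g.s x = g.mul (g.inv x) γ := by
      rw [← r_eq_self_of_mem_unitSpace (hK hmem), g.r_mul _ _ (by rw [g.s_inv]; exact hx),
        g.r_inv]
    exact hne (by rw [← mul_inv_cancel_left (g := g) hx, ← hsx, g.mul_unit])
  rw [ind, indicator_of_notMem hxγ, mul_zero]

lemma conv_ind_left_mem_AG [T2Space G] {K : Set G} (hK : K ⊆ g.unitSpace) (hKA : ind K ∈ AG)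
    {p : G → ℂ} (hp : p ∈ AG) : g.conv (ind K) p ∈ AG := by
  refine ⟨?_, g.hasCompactSupport_conv hKA.2 hp.2⟩
  rw [show g.conv (ind K) p = (ind K ∘ g.r) * p from funext (conv_ind_left_apply hK p)]
  exact (hKA.1.comp_continuous g.continuous_r).mul hp.1

lemma conv_ind_right_mem_AG [T2Space G] {K : Set G} (hK : K ⊆ g.unitSpace) (hKA : ind K ∈ AG)
    {p : G → ℂ} (hp : p ∈ AG) : g.conv p (ind K) ∈ AG := by
  refine ⟨?_, g.hasCompactSupport_conv hp.2 hKA.2⟩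
  rw [show g.conv p (ind K) = p * (ind K ∘ g.s) from funext (conv_ind_right_apply hK p)]
  exact hp.1.mul (hKA.1.comp_continuous g.continuous_s)

lemma conv_ind_inv_image_apply_of_mem {B : Set G} (hB : InjOn g.s B) {b γ : G} (hb : b ∈ B)
    (hbγ : g.s b = g.r γ) (f : G → ℂ) :
    g.conv (ind (g.inv '' B)) f γ = f (g.mul b γ) := by
  rw [conv, finsum_mem_eq_single_of_mem (S := {α | g.r α = g.r γ}) (a := g.inv b)
    (by rw [mem_ofPred_eq, g.r_inv, hbγ])]
  · rw [ind, indicator_of_mem (mem_image_of_mem _ hb), Pi.one_apply, one_mul, g.inv_inv]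
  · rintro _ hx hne
    rw [ind, indicator_of_notMem, zero_mul]
    rintro ⟨b', hb', rfl⟩
    rw [mem_ofPred_eq, g.r_inv] at hx
    exact hne (congrArg g.inv (hB hb' hb (hx.trans hbγ.symm)))

lemma conv_ind_inv_image_apply_of_notMem {B : Set G} {γ : G} (hγ : g.r γ ∉ g.s '' B)
    (f : G → ℂ) : g.conv (ind (g.inv '' B)) f γ = 0 := by
  refine finsum_mem_eq_zero_of_forall_eq_zero fun x hx => ?_
  rw [ind, indicator_of_notMem, zero_mul]
  rintro ⟨b, hb, rfl⟩
  rw [mem_ofPred_eq, g.r_inv] at hx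
  exact hγ ⟨b, hb, hx⟩

section LocalInverse

variable {e : OpenPartialHomeomorph G G} {W : Set G}

lemma s_symm_apply (he : g.s = e) {w : G} (hw : w ∈ e.target) : g.s (e.symm w) = w :=
  he ▸ e.right_inv hw

lemma conv_ind_inv_symm_image_eq (he : g.s = e) (hW : W ⊆ e.target) (f : G → ℂ) :
    g.conv (ind (g.inv '' (e.symm '' W))) f =
      (g.r ⁻¹' W).indicator fun γ => f (g.mul (e.symm (g.r γ)) γ) := by
  have hinj : InjOn g.s (e.symm '' W) := by
    rintro _ ⟨w, hw, rfl⟩ _ ⟨w', hw', rfl⟩ h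
    rw [s_symm_apply he (hW hw), s_symm_apply he (hW hw')] at h
    rw [h]
  funext γ
  by_cases hγ : γ ∈ g.r ⁻¹' W
  · rw [indicator_of_mem hγ]
    exact conv_ind_inv_image_apply_of_mem hinj (mem_image_of_mem _ hγ)
      (s_symm_apply he (hW hγ)) f
  · rw [indicator_of_notMem hγ]
    refine conv_ind_inv_image_apply_of_notMem ?_ f
    rintro ⟨_, ⟨w, hw, rfl⟩, h⟩
    rw [s_symm_apply he (hW hw)] at h
    exact hγ (show g.r γ ∈ W from h ▸ hw)

lemma ind_inv_symm_image_mem_AG [T2Space G] (hWc : IsCompact W) (hWo : IsOpen W)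
    (hW : W ⊆ e.target) : ind (g.inv '' (e.symm '' W)) ∈ AG := by
  refine ind_mem_AG ((hWc.image_of_continuousOn (e.continuousOn_symm.mono hW)).image
    g.continuous_inv) ?_
  rw [Involutive.image_eq_preimage_symm g.inv_inv]
  exact (e.isOpen_image_symm_of_subset_target hWo hW).preimage g.continuous_inv

lemma conv_ind_inv_symm_image_mem_AG [T2Space G] (he : g.s = e) (hWc : IsCompact W)
    (hWo : IsOpen W) (hW : W ⊆ e.target) {f : G → ℂ} (hf : f ∈ AG) :
    g.conv (ind (g.inv '' (e.symm '' W))) f ∈ AG := by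
  refine ⟨?_, g.hasCompactSupport_conv (ind_inv_symm_image_mem_AG hWc hWo hW).2 hf.2⟩
  rw [conv_ind_inv_symm_image_eq he hW]
  have hmaps : MapsTo (fun γ => (e.symm (g.r γ), γ)) (g.r ⁻¹' W) {p | g.s p.1 = g.r p.2} :=
    fun γ hγ => s_symm_apply he (hW hγ)
  have hcont : ContinuousOn (fun γ => g.mul (e.symm (g.r γ)) γ) (g.r ⁻¹' W) :=
    g.continuous_mul.comp (((e.continuousOn_symm.mono hW).comp g.continuous_r.continuousOn
      (mapsTo_preimage _ _)).prodMk continuousOn_id) hmaps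
  exact hf.1.indicator_comp_of_continuousOn
    ⟨hWc.isClosed.preimage g.continuous_r, hWo.preimage g.continuous_r⟩ hcont

end LocalInverse

variable [T2Space G]

lemma exists_conv_eqOn_unit_nbhd (hs : g.SourceEtale) (hbasis : g.UnitBasis) {f : G → ℂ}
    (hf : f ∈ AG) (γ₀ : G) :
    ∃ a ∈ AG, g.conv a f ∈ AG ∧
      ∃ W : Set G, IsOpen W ∧ g.s γ₀ ∈ W ∧ ∀ w ∈ W, g.conv a f w = f γ₀ := by
  obtain ⟨e₀, hγ₀, he₀⟩ := hs.isLocalHomeomorph γ₀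
  set e := e₀.restrOpen _ (hf.1.isOpen_fiber (f γ₀))
  have he : g.s = e := he₀
  have hγ₀e : g.s γ₀ ∈ e.target := he ▸ e.map_source ⟨hγ₀, rfl⟩
  obtain ⟨W, hWc, hWo, hγ₀W, hWe, hWu⟩ :=
    hbasis _ (g.s_mem_unitSpace γ₀) e.target e.open_target hγ₀e
  refine ⟨_, ind_inv_symm_image_mem_AG hWc hWo hWe,
    conv_ind_inv_symm_image_mem_AG he hWc hWo hWe hf, W, hWo, hγ₀W, fun w hw => ?_⟩
  have hrw : g.r w = w := r_eq_self_of_mem_unitSpace (hWu hw)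
  rw [conv_ind_inv_symm_image_eq he hWe, indicator_of_mem (by rwa [mem_preimage, hrw]), hrw]
  have hmul := g.mul_unit (e.symm w)
  rw [s_symm_apply he (hWe hw)] at hmul
  rw [hmul]
  exact (e.map_target (hWe hw)).2

lemma exists_isOpen_forall_s_notMem_of_r_mem {D : Set G} (hD : IsCompact D)
    (hDu : Disjoint D g.unitSpace) {u : G} (hu : u ∈ g.unitSpace)
    (hiso : ∀ γ : G, g.r γ = u → g.s γ = u → γ = u) :
    ∃ P : Set G, IsOpen P ∧ u ∈ P ∧ ∀ γ ∈ D, g.r γ ∈ P → g.s γ ∉ P := by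
  have hclosed : IsClosed ((fun γ => (g.r γ, g.s γ)) '' D) :=
    (hD.image (g.continuous_r.prodMk g.continuous_s)).isClosed
  have huu : (u, u) ∉ (fun γ => (g.r γ, g.s γ)) '' D := by
    rintro ⟨γ, hγ, h⟩
    obtain ⟨hr, hs⟩ := Prod.ext_iff.1 h
    exact hDu.notMem_of_mem_left (hiso γ hr hs ▸ hγ) hu
  obtain ⟨P₁, P₂, hP₁, hP₂, hu₁, hu₂, hsub⟩ := isOpen_prod_iff.1 hclosed.isOpen_compl u u huu
  exact ⟨P₁ ∩ P₂, hP₁.inter hP₂, ⟨hu₁, hu₂⟩,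
    fun γ hγ hr hs => hsub ⟨hr.1, hs.2⟩ ⟨γ, hγ, rfl⟩⟩

lemma exists_conv_ind_conv_ind_eq_smul (hs : g.SourceEtale) (hbasis : g.UnitBasis) {h : G → ℂ}
    (hh : h ∈ AG) {W : Set G} (hWo : IsOpen W) {c : ℂ} (hconst : ∀ w ∈ W, h w = c) {u : G}
    (huW : u ∈ W) (hu : u ∈ g.unitSpace) (hiso : ∀ γ : G, g.r γ = u → g.s γ = u → γ = u) :
    ∃ K : Set G, u ∈ K ∧ IsCompact K ∧ IsOpen K ∧ K ⊆ g.unitSpace ∧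
      g.conv (ind K) (g.conv h (ind K)) = c • ind K := by
  obtain ⟨P, hPo, huP, hP⟩ := exists_isOpen_forall_s_notMem_of_r_mem
    (hh.2.isCompact.diff (isOpen_unitSpace hs)) disjoint_sdiff_left hu hiso
  obtain ⟨K, hKc, hKo, huK, hKPW, hKu⟩ := hbasis u hu (P ∩ W) (hPo.inter hWo) ⟨huP, huW⟩
  refine ⟨K, huK, hKc, hKo, hKu, funext fun γ => ?_⟩
  rw [conv_ind_left_apply hKu, conv_ind_right_apply hKu, Pi.smul_apply, smul_eq_mul]
  by_cases hγ : g.r γ ∈ K ∧ g.s γ ∈ K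
  · by_cases hγu : γ ∈ g.unitSpace
    · rw [r_eq_self_of_mem_unitSpace hγu, s_eq_self_of_mem_unitSpace hγu] at hγ ⊢
      simp [ind, hγ.1, hconst γ (hKPW hγ.1).2]
    · have hhγ : h γ = 0 := image_eq_zero_of_notMem_tsupport fun hγh =>
        hP γ ⟨hγh, hγu⟩ (hKPW hγ.1).1 (hKPW hγ.2).1
      have hγK : γ ∉ K := fun hγK => hγu (hKu hγK)
      simp [ind, hhγ, hγK]
  · have hγK : γ ∉ K := fun hγK => hγ
      ⟨(r_eq_self_of_mem_unitSpace (hKu hγK)).symm ▸ hγK,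
        (s_eq_self_of_mem_unitSpace (hKu hγK)).symm ▸ hγK⟩
    rcases not_and_or.1 hγ with hr | hs
    · simp [ind, hr, hγK]
    · simp [ind, hs, hγK]

end EtaleGroupoid

theorem cuntz_krieger_uniqueness_general {G : Type*} [TopologicalSpace G] [T2Space G]
    (g : EtaleGroupoid G) (hs : g.SourceEtale)
    (hu : g.UnitBasis)
    (hdense : g.unitSpace ⊆
      closure {u : G | u ∈ g.unitSpace ∧ ∀ γ : G, g.r γ = u → g.s γ = u → γ = u})
    {B : Type*} [Ring B] [Algebra ℂ B] (π : ↥(EtaleGroupoid.AG (G := G)) →ₗ[ℂ] B)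
    (hmul : ∀ f h : ↥(EtaleGroupoid.AG (G := G)), ∀ p : g.conv ↑f ↑h ∈ (EtaleGroupoid.AG (G := G)),
      π ⟨g.conv ↑f ↑h, p⟩ = π f * π h)
    (hker : ∃ f : ↥(EtaleGroupoid.AG (G := G)), f ≠ 0 ∧ π f = 0) :
    ∃ K : Set G, K.Nonempty ∧ IsCompact K ∧ IsOpen K ∧ K ⊆ g.unitSpace ∧
      ∀ p : EtaleGroupoid.ind K ∈ (EtaleGroupoid.AG (G := G)), π ⟨EtaleGroupoid.ind K, p⟩ = 0 := by
  obtain ⟨f, hf0, hfπ⟩ := hker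
  obtain ⟨γ₀, hγ₀⟩ : ∃ γ₀, (f : G → ℂ) γ₀ ≠ 0 := by
    by_contra! h
    exact hf0 (Subtype.ext (funext h))
  obtain ⟨a, ha, haf, W, hWo, hγ₀W, hconst⟩ := g.exists_conv_eqOn_unit_nbhd hs hu f.2 γ₀
  obtain ⟨v, hvW, hv, hiso⟩ := mem_closure_iff.1 (hdense (g.s_mem_unitSpace γ₀)) W hWo hγ₀W
  obtain ⟨K, hvK, hKc, hKo, hKu, hKeq⟩ :=
    g.exists_conv_ind_conv_ind_eq_smul hs hu haf hWo hconst hvW hv hiso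
  refine ⟨K, ⟨v, hvK⟩, hKc, hKo, hKu, fun hK => ?_⟩
  have hafK := conv_ind_right_mem_AG hKu hK haf
  have hπaf : π ⟨_, haf⟩ = 0 := by rw [hmul ⟨a, ha⟩ f haf, hfπ, mul_zero]
  have hcK : (f : G → ℂ) γ₀ • π ⟨ind K, hK⟩ = 0 := by
    have hKafK : ((f : G → ℂ) γ₀ • ⟨ind K, hK⟩ : AG) = ⟨_, conv_ind_left_mem_AG hKu hK hafK⟩ :=
      Subtype.ext hKeq.symm
    rw [← map_smul, hKafK,
      hmul ⟨_, hK⟩ ⟨_, hafK⟩, hmul ⟨_, haf⟩ ⟨_, hK⟩, hπaf, zero_mul, mul_zero]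
  exact (smul_eq_zero.1 hcK).resolve_left hγ₀

/-- Cuntz–Krieger uniqueness: if the units with trivial isotropy are dense in the
unit space and `π : A(G) → B` is an algebra homomorphism with nonzero kernel, then
`π` kills the indicator of some nonempty compact open subset of the unit space. -/
theorem cuntz_krieger_uniqueness {G : Type*} [TopologicalSpace G] [T2Space G]
    [LocallyCompactSpace G] (g : EtaleGroupoid G) (hs : g.SourceEtale)
    (hu : g.UnitBasis)
    (hdense : g.unitSpace ⊆
      closure {u : G | u ∈ g.unitSpace ∧ ∀ γ : G, g.r γ = u → g.s γ = u → γ = u})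
    {B : Type*} [Ring B] [Algebra ℂ B] (π : ↥(EtaleGroupoid.AG (G := G)) →ₗ[ℂ] B)
    (hmul : ∀ f h : ↥(EtaleGroupoid.AG (G := G)), ∀ p : g.conv ↑f ↑h ∈ (EtaleGroupoid.AG (G := G)),
      π ⟨g.conv ↑f ↑h, p⟩ = π f * π h)
    (hker : ∃ f : ↥(EtaleGroupoid.AG (G := G)), f ≠ 0 ∧ π f = 0) :
    ∃ K : Set G, K.Nonempty ∧ IsCompact K ∧ IsOpen K ∧ K ⊆ g.unitSpace ∧
      ∀ p : EtaleGroupoid.ind K ∈ (EtaleGroupoid.AG (G := G)), π ⟨EtaleGroupoid.ind K, p⟩ = 0 :=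
  cuntz_krieger_uniqueness_general g hs hu hdense π hmul hker
end
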